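/- arXiv:1509.03460 — 6 statements merged into one kernel-verified Lean document; each statement's English description precedes it below -/
import Mathlib

section
/- Let Γ be a finite-dimensional algebra of global dimension at most 2 over a field, and let Y be a Γ-module which is both generated by and cogenerated by a projective-injective Γ-module Q (i.e. there exist exact sequences 0 → X → I → Y → 0 and 0 → Y → P → Z → 0 with I, P in add(Q)). Then Y has projective dimension at most 1, injective dimension at most 1, and Ext¹_Γ(Y, Y) = 0. -/
/-!
Let `0 → Y → Qᵐ → Z → 0` come from the cogeneration and `Qⁿ ↠ Y` from the generation. Comparing
this sequence with a length-two projective resolution of `Z` (Schanuel's lemma, through the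
pullback of `Qᵐ → Z ← P₀`) gives `pd Y ≤ 1`; in the same way every ideal `J` of `Γ` has
`pd J ≤ 1`. If `pd M ≤ 1`, then `Ext¹(M, K) = 0` for every quotient `K` of an injective module
`I`, since `Ext¹(M, K)` sits between `Ext¹(M, I) = 0` and `Ext²(M, ker (I ↠ K)) = 0`.
Taking `M = Y`, `K = Y` gives `Ext¹(Y, Y) = 0`. Taking `M = J`, `K = Y`, every map `J → Z` lifts
to `Qᵐ`, hence extends to `Γ`; by Baer's criterion `Z` is injective, so `0 → Y → Qᵐ → Z → 0`
shows `id Y ≤ 1`.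
-/

universe u v w

open LinearMap Function

section

variable {R : Type*} [Ring R] {A B C D : Type*} [AddCommGroup A] [AddCommGroup B]
  [AddCommGroup C] [AddCommGroup D] [Module R A] [Module R B] [Module R C] [Module R D]

theorem Function.Exact.exists_comp_eq_of_injective {f : A →ₗ[R] B} {g : B →ₗ[R] C}
    (hfg : Exact f g) (hf : Function.Injective f) {w : D →ₗ[R] B} (hw : g ∘ₗ w = 0) :
    ∃ φ : D →ₗ[R] A, f ∘ₗ φ = w := by
  have mem : ∀ x, w x ∈ range f := fun x => (hfg (w x)).mp (LinearMap.congr_fun hw x)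
  refine ⟨(LinearEquiv.ofInjective f hf).symm ∘ₗ w.codRestrict (range f) mem, ?_⟩
  ext x
  simp

theorem Function.Exact.exists_comp_eq_of_projective [Module.Projective R D]
    {f : A →ₗ[R] B} {g : B →ₗ[R] C} (hfg : Exact f g) {w : D →ₗ[R] B} (hw : g ∘ₗ w = 0) :
    ∃ φ : D →ₗ[R] A, f ∘ₗ φ = w := by
  have mem : ∀ x, w x ∈ range f := fun x => (hfg (w x)).mp (LinearMap.congr_fun hw x)
  obtain ⟨φ, hφ⟩ := Module.projective_lifting_property f.rangeRestrict
    (w.codRestrict (range f) mem) f.surjective_rangeRestrict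
  exact ⟨φ, by ext x; exact congr_arg Subtype.val (LinearMap.congr_fun hφ x)⟩

theorem Function.Exact.exists_comp_eq_of_surjective {f : A →ₗ[R] B} {g : B →ₗ[R] C}
    (hfg : Exact f g) (hg : Surjective g) {w : B →ₗ[R] D} (hw : w ∘ₗ f = 0) :
    ∃ φ : C →ₗ[R] D, φ ∘ₗ g = w := by
  have hle : range f ≤ ker w := by
    rintro _ ⟨x, rfl⟩
    exact LinearMap.congr_fun hw x
  refine ⟨(range f).liftQ w hle ∘ₗ (hfg.linearEquivOfSurjective hg).symm.toLinearMap, ?_⟩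
  ext x
  simp

theorem Module.Projective.of_exact [Module.Projective R A] [Module.Projective R C]
    {f : A →ₗ[R] B} {g : B →ₗ[R] C} (hf : Function.Injective f) (hg : Surjective g)
    (hfg : Exact f g) : Module.Projective R B := by
  obtain ⟨l, hl⟩ := Module.projective_lifting_property g LinearMap.id hg
  exact .of_equiv' (hfg.splitSurjectiveEquiv hf ⟨l, hl⟩).1.symm

theorem Module.Projective.ker_of_exact [Module.Projective R A] {f : A →ₗ[R] B} {g : B →ₗ[R] C}
    (hf : Function.Injective f) (hfg : Exact f g) : Module.Projective R (ker g) :=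
  .of_equiv' ((LinearEquiv.ofInjective f hf).trans (.ofEq _ _ hfg.linearMap_ker_eq.symm))

theorem Module.Projective.ker_comp {a : A →ₗ[R] B} (ha : Surjective a) (b : B →ₗ[R] C)
    [Module.Projective R (ker a)] [Module.Projective R (ker b)] :
    Module.Projective R (ker (b ∘ₗ a)) := by
  let incl := Submodule.inclusion (ker_le_ker_comp a b)
  let res : ker (b ∘ₗ a) →ₗ[R] ker b := a.restrict fun _ hx => hx
  refine Module.Projective.of_exact (f := incl) (g := res) (Submodule.inclusion_injective _) ?_ ?_
  · rintro ⟨y, hy⟩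
    obtain ⟨x, rfl⟩ := ha y
    exact ⟨⟨x, hy⟩, rfl⟩
  · rintro ⟨x, hx⟩
    constructor
    · intro h
      exact ⟨⟨x, congr_arg Subtype.val h⟩, rfl⟩
    · rintro ⟨⟨x', hx'⟩, h⟩
      cases congr_arg Subtype.val h
      exact Subtype.ext hx'

variable {P₀ P : Type*} [AddCommGroup P₀] [AddCommGroup P] [Module R P₀] [Module R P]

def LinearMap.pullback (G : P₀ →ₗ[R] C) (p : P →ₗ[R] C) : Submodule R (P₀ × P) :=
  eqLocus (G ∘ₗ fst R P₀ P) (p ∘ₗ snd R P₀ P)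

theorem LinearMap.mem_pullback {G : P₀ →ₗ[R] C} {p : P →ₗ[R] C} {x : P₀} {q : P} :
    (x, q) ∈ G.pullback p ↔ G x = p q :=
  Iff.rfl

-- Splitting `fst : G.pullback p ↠ P₀`, whose kernel is `A`, identifies the pullback with `A × P₀`.
theorem exists_surjective_from_pullback [Module.Projective R P₀]
    {ι : A →ₗ[R] P} {p : P →ₗ[R] C} (hι : Function.Injective ι) (hp : Surjective p)
    (hιp : Exact ι p) (G : P₀ →ₗ[R] C) :
    ∃ ρ : G.pullback p →ₗ[R] A, Surjective ρ ∧ Module.Projective R (ker ρ) := by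
  set W := G.pullback p
  obtain ⟨δ, hδ⟩ := Module.projective_lifting_property p G hp
  have hpδ : ∀ x, p (δ x) = G x := LinearMap.congr_fun hδ
  let τ : P₀ →ₗ[R] W :=
    codRestrict W (LinearMap.id.prod δ) fun x => mem_pullback.mpr (hpδ x).symm
  obtain ⟨ρ, hρ⟩ := hιp.exists_comp_eq_of_injective hι
    (w := (snd R P₀ P - δ ∘ₗ fst R P₀ P) ∘ₗ W.subtype) <| by
      ext ⟨⟨x, q⟩, hxq⟩
      simp [hpδ, mem_pullback.mp hxq]
  have hιρ : ∀ w : W, ι (ρ w) = (w : P₀ × P).2 - δ (w : P₀ × P).1 := LinearMap.congr_fun hρ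
  refine ⟨ρ, fun a => ⟨⟨(0, ι a), ?_⟩, hι ?_⟩, ?_⟩
  · rw [mem_pullback, map_zero, (hιp (ι a)).mpr ⟨a, rfl⟩]
  · simp [hιρ]
  refine Module.Projective.ker_of_exact (f := τ) (fun x y h => congr_arg (·.1.1) h) ?_
  rintro ⟨⟨x, q⟩, hxq⟩
  rw [← hι.eq_iff, hιρ, map_zero, sub_eq_zero]
  constructor
  · intro h
    exact ⟨x, Subtype.ext (Prod.ext rfl h.symm)⟩
  · rintro ⟨x', h⟩
    cases congr_arg (·.1) h
    exact (congr_arg (·.1.2) h).symm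

-- Splitting `snd : G.pullback p ↠ P`, whose kernel is `ker G = range f₁`, identifies the pullback
-- with `range f₁ × P`, onto which `P₁ × P` maps with kernel `P₂`.
theorem exists_surjective_to_pullback [Module.Projective R P]
    {P₁ P₂ : Type*} [AddCommGroup P₁] [AddCommGroup P₂] [Module R P₁] [Module R P₂]
    [Module.Projective R P₂] {f₂ : P₂ →ₗ[R] P₁} {f₁ : P₁ →ₗ[R] P₀} {G : P₀ →ₗ[R] C}
    (hf₂ : Function.Injective f₂) (hG : Surjective G) (h₂₁ : Exact f₂ f₁) (h₁G : Exact f₁ G)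
    (p : P →ₗ[R] C) :
    ∃ α : P₁ × P →ₗ[R] G.pullback p, Surjective α ∧ Module.Projective R (ker α) := by
  set W := G.pullback p
  obtain ⟨γ, hγ⟩ := Module.projective_lifting_property G p hG
  have hGγ : ∀ q, G (γ q) = p q := LinearMap.congr_fun hγ
  have hGf₁ : ∀ b, G (f₁ b) = 0 := fun b => (h₁G _).mpr ⟨b, rfl⟩
  let α : P₁ × P →ₗ[R] W :=
    codRestrict W ((f₁ ∘ₗ fst R P₁ P + γ ∘ₗ snd R P₁ P).prod (snd R P₁ P)) fun ⟨b, q⟩ =>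
      mem_pullback.mpr (by simp [hGf₁, hGγ])
  refine ⟨α, ?_, Module.Projective.ker_of_exact (f := inl R P₁ P ∘ₗ f₂)
    (inl_injective.comp hf₂) ?_⟩
  · rintro ⟨⟨x, q⟩, hxq⟩
    obtain ⟨b, hb⟩ := (h₁G (x - γ q)).mp (by rw [map_sub, hGγ, mem_pullback.mp hxq, sub_self])
    exact ⟨(b, q), Subtype.ext (Prod.ext (by simp [α, hb]) rfl)⟩
  · rintro ⟨b, q⟩
    have hα : α (b, q) = 0 ↔ f₁ b + γ q = 0 ∧ q = 0 := by
      simp [α, Subtype.ext_iff]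
    rw [hα]
    constructor
    · rintro ⟨hb, rfl⟩
      obtain ⟨t, rfl⟩ := (h₂₁ b).mp (by simpa using hb)
      exact ⟨t, rfl⟩
    · rintro ⟨t, h⟩
      cases h
      simp [(h₂₁ _).mpr ⟨t, rfl⟩]

end

instance Module.Projective.pi {R : Type*} [Ring R] {ι : Type*} [Fintype ι] {M : ι → Type*}
    [∀ i, AddCommGroup (M i)] [∀ i, Module R (M i)] [∀ i, Module.Projective R (M i)] :
    Module.Projective R (∀ i, M i) := by
  classical
  exact .of_equiv' DFinsupp.linearEquivFunOnFintype

namespace Module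

variable (R : Type u) [Ring R]

def HasProjectiveDimensionLEOne (M : Type v) [AddCommGroup M] [Module R M] : Prop :=
  ∃ (P₀ P₁ : Type v) (_ : AddCommGroup P₀) (_ : AddCommGroup P₁)
    (_ : Module R P₀) (_ : Module R P₁),
    Module.Projective R P₀ ∧ Module.Projective R P₁ ∧
    ∃ (f₁ : P₁ →ₗ[R] P₀) (g : P₀ →ₗ[R] M),
      Function.Injective f₁ ∧ Function.Surjective g ∧ Function.Exact f₁ g

def HasProjectiveDimensionLETwo (M : Type v) [AddCommGroup M] [Module R M] : Prop :=
  ∃ (P₀ P₁ P₂ : Type v) (_ : AddCommGroup P₀) (_ : AddCommGroup P₁)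
    (_ : AddCommGroup P₂) (_ : Module R P₀) (_ : Module R P₁) (_ : Module R P₂),
    Module.Projective R P₀ ∧ Module.Projective R P₁ ∧ Module.Projective R P₂ ∧
    ∃ (f₂ : P₂ →ₗ[R] P₁) (f₁ : P₁ →ₗ[R] P₀) (g : P₀ →ₗ[R] M),
      Function.Injective f₂ ∧ Function.Surjective g ∧
      Function.Exact f₂ f₁ ∧ Function.Exact f₁ g

variable {R}

theorem HasProjectiveDimensionLEOne.of_surjective {P M : Type v} [AddCommGroup P]
    [AddCommGroup M] [Module R P] [Module R M] [Module.Projective R P] {g : P →ₗ[R] M}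
    (hg : Surjective g) [Module.Projective R (ker g)] : HasProjectiveDimensionLEOne R M :=
  ⟨P, ker g, _, _, _, _, ‹_›, ‹_›, (ker g).subtype, g, (ker g).injective_subtype, hg,
    exact_subtype_ker_map g⟩

theorem HasProjectiveDimensionLETwo.hasProjectiveDimensionLEOne_of_exact {Y P Z : Type v}
    [AddCommGroup Y] [AddCommGroup P] [AddCommGroup Z] [Module R Y] [Module R P] [Module R Z]
    (hZ : HasProjectiveDimensionLETwo R Z) [Module.Projective R P] {ι : Y →ₗ[R] P}
    {p : P →ₗ[R] Z} (hι : Function.Injective ι) (hp : Surjective p) (hιp : Exact ι p) :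
    HasProjectiveDimensionLEOne R Y := by
  obtain ⟨P₀, P₁, P₂, _, _, _, _, _, _, _, _, _, f₂, f₁, G, hf₂, hG, h₂₁, h₁G⟩ := hZ
  obtain ⟨α, hα, _⟩ := exists_surjective_to_pullback hf₂ hG h₂₁ h₁G p
  obtain ⟨ρ, hρ, _⟩ := exists_surjective_from_pullback hι hp hιp G
  have := Module.Projective.ker_comp hα ρ
  exact .of_surjective (g := ρ ∘ₗ α) (hρ.comp hα)

-- That is, `Ext¹(M, ker g) = 0` whenever `ker g` is a quotient of an injective module.
theorem HasProjectiveDimensionLEOne.exists_comp_eq_of_exact [Small.{v} R] {M : Type w}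
    [AddCommGroup M] [Module R M] (hM : HasProjectiveDimensionLEOne R M) {I E N : Type v}
    [AddCommGroup I] [AddCommGroup E] [AddCommGroup N] [Module R I] [Module R E] [Module R N]
    [Module.Injective R I] {j : I →ₗ[R] E} {g : E →ₗ[R] N} (hg : Surjective g)
    (hjg : Exact j g) (φ : M →ₗ[R] N) : ∃ ψ : M →ₗ[R] E, g ∘ₗ ψ = φ := by
  obtain ⟨S₀, S₁, _, _, _, _, _, _, u, v, hu, hv, huv⟩ := hM
  obtain ⟨h, hh⟩ := projective_lifting_property g (φ ∘ₗ v) hg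
  obtain ⟨α, hα⟩ := hjg.exists_comp_eq_of_projective (w := h ∘ₗ u) <| by
    rw [← LinearMap.comp_assoc, hh, LinearMap.comp_assoc, huv.linearMap_comp_eq_zero, comp_zero]
  obtain ⟨β, hβ⟩ := Module.Injective.extension_property R I S₁ S₀ u hu α
  obtain ⟨ψ, hψ⟩ := huv.exists_comp_eq_of_surjective hv (w := h - j ∘ₗ β) <| by
    rw [sub_comp, LinearMap.comp_assoc, hβ, hα, sub_self]
  refine ⟨ψ, (cancel_right hv).mp ?_⟩
  rw [LinearMap.comp_assoc, hψ, comp_sub, hh, ← LinearMap.comp_assoc,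
    hjg.linearMap_comp_eq_zero, zero_comp, sub_zero]

theorem Injective.of_exact_of_forall_ideal [Small.{v} R] {I₀ I Z : Type v} [AddCommGroup I₀]
    [AddCommGroup I] [AddCommGroup Z] [Module R I₀] [Module R I] [Module R Z]
    [Module.Injective R I₀] [Module.Injective R I]
    (hR : ∀ J : Ideal R, HasProjectiveDimensionLEOne R J) {j : I₀ →ₗ[R] I} {p : I →ₗ[R] Z}
    (hp : Surjective p) (hjp : Exact j p) : Module.Injective R Z := by
  refine Baer.injective fun J φ => ?_
  obtain ⟨ψ, hψ⟩ := (hR J).exists_comp_eq_of_exact hp hjp φ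
  obtain ⟨Ψ, hΨ⟩ := Module.Injective.extension_property R I J R J.subtype J.injective_subtype ψ
  exact ⟨p ∘ₗ Ψ, fun x hx => by rw [← hψ, ← hΨ]; rfl⟩

end Module

theorem auslander_partial_tilting_general
    {Γ : Type u} [Ring Γ]
    -- global dimension ≤ 2: every module has a projective resolution of length ≤ 2
    (hgl : ∀ (M : Type u) (_ : AddCommGroup M) (_ : Module Γ M),
      ∃ (P₀ P₁ P₂ : Type u) (_ : AddCommGroup P₀) (_ : AddCommGroup P₁)
        (_ : AddCommGroup P₂) (_ : Module Γ P₀) (_ : Module Γ P₁) (_ : Module Γ P₂),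
        Module.Projective Γ P₀ ∧ Module.Projective Γ P₁ ∧ Module.Projective Γ P₂ ∧
        ∃ (f₂ : P₂ →ₗ[Γ] P₁) (f₁ : P₁ →ₗ[Γ] P₀) (g : P₀ →ₗ[Γ] M),
          Function.Injective f₂ ∧ Function.Surjective g ∧
          Function.Exact f₂ f₁ ∧ Function.Exact f₁ g)
    (Q Y : Type u) [AddCommGroup Q] [Module Γ Q] [AddCommGroup Y] [Module Γ Y]
    -- Q is projective-injective
    (hQproj : Module.Projective Γ Q) (hQinj : Module.Injective Γ Q)
    -- Y is generated by Q: a quotient of a finite direct sum of copies of Q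
    (hgen : ∃ (n : ℕ) (g : (Fin n → Q) →ₗ[Γ] Y), Function.Surjective g)
    -- Y is cogenerated by Q: embeds in a finite direct sum of copies of Q
    (hcogen : ∃ (n : ℕ) (f : Y →ₗ[Γ] (Fin n → Q)), Function.Injective f) :
    -- projective dimension of Y is at most 1
    (∃ (P₀ P₁ : Type u) (_ : AddCommGroup P₀) (_ : AddCommGroup P₁)
       (_ : Module Γ P₀) (_ : Module Γ P₁),
       Module.Projective Γ P₀ ∧ Module.Projective Γ P₁ ∧
       ∃ (f₁ : P₁ →ₗ[Γ] P₀) (g : P₀ →ₗ[Γ] Y),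
         Function.Injective f₁ ∧ Function.Surjective g ∧ Function.Exact f₁ g) ∧
    -- injective dimension of Y is at most 1
    (∃ (I₀ I₁ : Type u) (_ : AddCommGroup I₀) (_ : AddCommGroup I₁)
       (_ : Module Γ I₀) (_ : Module Γ I₁),
       Module.Injective Γ I₀ ∧ Module.Injective Γ I₁ ∧
       ∃ (f : Y →ₗ[Γ] I₀) (g : I₀ →ₗ[Γ] I₁),
         Function.Injective f ∧ Function.Surjective g ∧ Function.Exact f g) ∧
    -- Ext¹_Γ(Y, Y) = 0: every short exact sequence 0 → Y → E → Y → 0 splits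
    (∀ (E : Type u) (_ : AddCommGroup E) (_ : Module Γ E)
       (f : Y →ₗ[Γ] E) (g : E →ₗ[Γ] Y),
       Function.Injective f → Function.Surjective g → Function.Exact f g →
       ∃ s : E →ₗ[Γ] Y, s.comp f = LinearMap.id) := by
  have := hQproj
  have := hQinj
  obtain ⟨n, π, hπ⟩ := hgen
  obtain ⟨m, ι, hι⟩ := hcogen
  have hp := (range ι).mkQ_surjective
  have hιp : Exact ι (range ι).mkQ := exact_map_mkQ_range ι
  have hπιp : Exact (ι ∘ₗ π) (range ι).mkQ := hπ.comp_exact_iff_exact.mpr hιp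
  have hΓ (M : Type u) [AddCommGroup M] [Module Γ M] : Module.HasProjectiveDimensionLETwo Γ M :=
    hgl M _ _
  have hY : Module.HasProjectiveDimensionLEOne Γ Y :=
    (hΓ _).hasProjectiveDimensionLEOne_of_exact hι hp hιp
  have hJ (J : Ideal Γ) : Module.HasProjectiveDimensionLEOne Γ J :=
    (hΓ _).hasProjectiveDimensionLEOne_of_exact J.injective_subtype J.mkQ_surjective
      (exact_subtype_mkQ J)
  refine ⟨hY, ?_, fun E _ _ f g hf hg hfg => ?_⟩
  · exact ⟨Fin m → Q, _, _, _, _, _, inferInstance,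
      .of_exact_of_forall_ideal hJ hp hπιp, ι, _, hι, hp, hιp⟩
  have hsection : ∃ s, g ∘ₗ s = LinearMap.id :=
    hY.exists_comp_eq_of_exact hg (hπ.comp_exact_iff_exact.mpr hfg) LinearMap.id
  exact ((hfg.split_tfae hf hg).out 0 1).mp hsection

/-- If `Γ` is a finite-dimensional algebra over a field `K` of global
dimension at most `2`, and `Y` is a (finite-dimensional) `Γ`-module generated and
cogenerated by a projective-injective module `Q`, then `Y` has projective dimension `≤ 1`,
injective dimension `≤ 1`, and `Ext¹_Γ(Y, Y) = 0` (every self-extension splits). -/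
theorem auslander_partial_tilting
    {K Γ : Type u} [Field K] [Ring Γ] [Algebra K Γ] [FiniteDimensional K Γ]
    -- global dimension ≤ 2: every module has a projective resolution of length ≤ 2
    (hgl : ∀ (M : Type u) (_ : AddCommGroup M) (_ : Module Γ M),
      ∃ (P₀ P₁ P₂ : Type u) (_ : AddCommGroup P₀) (_ : AddCommGroup P₁)
        (_ : AddCommGroup P₂) (_ : Module Γ P₀) (_ : Module Γ P₁) (_ : Module Γ P₂),
        Module.Projective Γ P₀ ∧ Module.Projective Γ P₁ ∧ Module.Projective Γ P₂ ∧
        ∃ (f₂ : P₂ →ₗ[Γ] P₁) (f₁ : P₁ →ₗ[Γ] P₀) (g : P₀ →ₗ[Γ] M),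
          Function.Injective f₂ ∧ Function.Surjective g ∧
          Function.Exact f₂ f₁ ∧ Function.Exact f₁ g)
    (Q Y : Type u) [AddCommGroup Q] [Module Γ Q] [AddCommGroup Y] [Module Γ Y]
    [Module K Y] [IsScalarTower K Γ Y] [FiniteDimensional K Y]
    -- Q is projective-injective
    (hQproj : Module.Projective Γ Q) (hQinj : Module.Injective Γ Q)
    -- Y is generated by Q: a quotient of a finite direct sum of copies of Q
    (hgen : ∃ (n : ℕ) (g : (Fin n → Q) →ₗ[Γ] Y), Function.Surjective g)
    -- Y is cogenerated by Q: embeds in a finite direct sum of copies of Q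
    (hcogen : ∃ (n : ℕ) (f : Y →ₗ[Γ] (Fin n → Q)), Function.Injective f) :
    -- projective dimension of Y is at most 1
    (∃ (P₀ P₁ : Type u) (_ : AddCommGroup P₀) (_ : AddCommGroup P₁)
       (_ : Module Γ P₀) (_ : Module Γ P₁),
       Module.Projective Γ P₀ ∧ Module.Projective Γ P₁ ∧
       ∃ (f₁ : P₁ →ₗ[Γ] P₀) (g : P₀ →ₗ[Γ] Y),
         Function.Injective f₁ ∧ Function.Surjective g ∧ Function.Exact f₁ g) ∧
    -- injective dimension of Y is at most 1
    (∃ (I₀ I₁ : Type u) (_ : AddCommGroup I₀) (_ : AddCommGroup I₁)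
       (_ : Module Γ I₀) (_ : Module Γ I₁),
       Module.Injective Γ I₀ ∧ Module.Injective Γ I₁ ∧
       ∃ (f : Y →ₗ[Γ] I₀) (g : I₀ →ₗ[Γ] I₁),
         Function.Injective f ∧ Function.Surjective g ∧ Function.Exact f g) ∧
    -- Ext¹_Γ(Y, Y) = 0: every short exact sequence 0 → Y → E → Y → 0 splits
    (∀ (E : Type u) (_ : AddCommGroup E) (_ : Module Γ E)
       (f : Y →ₗ[Γ] E) (g : E →ₗ[Γ] Y),
       Function.Injective f → Function.Surjective g → Function.Exact f g →
       ∃ s : E →ₗ[Γ] Y, s.comp f = LinearMap.id) :=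
  auslander_partial_tilting_general hgl Q Y hQproj hQinj hgen hcogen
end

section
/- In a recollement of abelian categories with intermediate extension functor c, if N is an object of the middle category B with e(N) ≅ M, then N ≅ c(M) if and only if N has no non-zero subobject and no non-zero quotient object lying in the subcategory A = Ker(e). -/
/-!
Through the adjunctions `ℓ ⊣ e ⊣ r`, a map from an object killed by `e` into `r(M)`, or a map
from `ℓ(M)` to such an object, is adjoint to a map out of or into a zero object, hence is zero.
Since `c(M)` is a subobject of `r(M)` and a quotient of `ℓ(M)`, it has no non-zero subobject or
quotient in `Ker e`. Conversely, the maps `ℓ(M) ⟶ N` and `N ⟶ r(M)` adjoint to `e(N) ≅ M` become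
isomorphisms under the exact functor `e`, so their cokernel and kernel lie in `Ker e` and vanish by
hypothesis; their composite is `ℓ(M) ⟶ r(M)`, so this epi-mono factorisation identifies `N` with
its image `c(M)`.
-/

open CategoryTheory Limits

universe v u v₁ u₁ v₂ u₂

/-- A recollement of abelian categories, with the six functors, the four adjunctions,
the isomorphism conditions and the identification of `A` with `Ker e`. -/
structure Recollement (A : Type u) (B : Type u₁) (C : Type u₂)
    [Category.{v} A] [Category.{v₁} B] [Category.{v₂} C]
    [Abelian A] [Abelian B] [Abelian C] where
  i : A ⥤ B
  p : B ⥤ A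
  q : B ⥤ A
  e : B ⥤ C
  l : C ⥤ B
  r : C ⥤ B
  adj_qi : q ⊣ i
  adj_ip : i ⊣ p
  adj_le : l ⊣ e
  adj_er : e ⊣ r
  counit_er_iso : IsIso adj_er.counit
  unit_le_iso : IsIso adj_le.unit
  counit_qi_iso : IsIso adj_qi.counit
  unit_ip_iso : IsIso adj_ip.unit
  ker_e : ∀ b : B, (∃ a : A, Nonempty (i.obj a ≅ b)) ↔ IsZero (e.obj b)

namespace Recollement

variable {A : Type u} {B : Type u₁} {C : Type u₂}
    [Category.{v} A] [Category.{v₁} B] [Category.{v₂} C]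
    [Abelian A] [Abelian B] [Abelian C] (R : Recollement A B C)

/-- The canonical map `ℓ(M) ⟶ r(M)`, adjoint to the inverse of the counit `e(r(M)) ≅ M`. -/
noncomputable def γ (M : C) : R.l.obj M ⟶ R.r.obj M :=
  (R.adj_le.homEquiv M (R.r.obj M)).symm
    (letI := R.counit_er_iso; inv (R.adj_er.counit.app M))

/-- The intermediate extension `c(M) = Im(ℓ(M) → r(M))`. -/
noncomputable def c (M : C) : B := Limits.image (R.γ M)

end Recollement

namespace CategoryTheory

variable {D : Type*} {E : Type*} [Category D] [Category E]

namespace Adjunction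

variable {F : D ⥤ E} {G : E ⥤ D}

theorem isZero_of_mono_of_isZero_obj [HasZeroMorphisms D] (adj : F ⊣ G) {X : D} {Y : E}
    (m : X ⟶ G.obj Y) [Mono m] (hX : IsZero (F.obj X)) : IsZero X := by
  rw [IsZero.iff_id_eq_zero, ← cancel_mono m]
  exact (adj.homEquiv X Y).symm.injective (hX.eq_of_src _ _)

theorem isZero_of_epi_of_isZero_obj [HasZeroMorphisms E] (adj : F ⊣ G) {X : D} {Y : E}
    (p : F.obj X ⟶ Y) [Epi p] (hY : IsZero (G.obj Y)) : IsZero Y := by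
  rw [IsZero.iff_id_eq_zero, ← cancel_epi p]
  exact (adj.homEquiv X Y).injective (hY.eq_of_tgt _ _)

theorem isIso_map_homEquiv_symm (adj : F ⊣ G) {X : D} {Y : E} (g : X ⟶ G.obj Y) [IsIso g]
    [IsIso (adj.unit.app X)] : IsIso (G.map ((adj.homEquiv X Y).symm g)) := by
  have : IsIso (adj.unit.app X ≫ G.map ((adj.homEquiv X Y).symm g)) := by
    rwa [← adj.homEquiv_unit X Y, Equiv.apply_symm_apply]
  exact IsIso.of_isIso_comp_left (adj.unit.app X) _

theorem isIso_map_homEquiv (adj : F ⊣ G) {X : D} {Y : E} (f : F.obj X ⟶ Y) [IsIso f]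
    [IsIso (adj.counit.app Y)] : IsIso (F.map (adj.homEquiv X Y f)) := by
  have : IsIso (F.map (adj.homEquiv X Y f) ≫ adj.counit.app Y) := by
    rwa [← adj.homEquiv_counit X Y, Equiv.symm_apply_apply]
  exact IsIso.of_isIso_comp_right _ (adj.counit.app Y)

end Adjunction

namespace Functor

variable [Preadditive D] [Preadditive E] (F : D ⥤ E)

theorem isZero_obj_cokernel_of_epi_map {X Y : D} (f : X ⟶ Y) [HasCokernel f]
    [HasCokernel (F.map f)] [PreservesColimit (parallelPair f 0) F] [F.PreservesZeroMorphisms]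
    [Epi (F.map f)] :
    IsZero (F.obj (cokernel f)) :=
  (isZero_cokernel_of_epi (F.map f)).of_iso (PreservesCokernel.iso F f)

theorem isZero_obj_kernel_of_mono_map {X Y : D} (f : X ⟶ Y) [HasKernel f] [HasKernel (F.map f)]
    [PreservesLimit (parallelPair f 0) F] [F.PreservesZeroMorphisms] [Mono (F.map f)] :
    IsZero (F.obj (Limits.kernel f)) :=
  (isZero_kernel_of_mono (F.map f)).of_iso (PreservesKernel.iso F f)

end Functor

end CategoryTheory

namespace Recollement

variable {A : Type u} {B : Type u₁} {C : Type u₂}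
    [Category.{v} A] [Category.{v₁} B] [Category.{v₂} C]
    [Abelian A] [Abelian B] [Abelian C] (R : Recollement A B C)

instance : IsIso R.adj_le.unit := R.unit_le_iso

instance : IsIso R.adj_er.counit := R.counit_er_iso

instance : R.e.IsLeftAdjoint := R.adj_er.isLeftAdjoint

instance : R.e.IsRightAdjoint := R.adj_le.isRightAdjoint

theorem isZero_of_mono_c {S : B} {M : C} (f : S ⟶ R.c M) [Mono f] (hS : IsZero (R.e.obj S)) :
    IsZero S :=
  -- `c` is not reducible, so instance search cannot compose through `R.c M = image (R.γ M)`
  have : Mono (f ≫ image.ι (R.γ M)) := mono_comp' ‹_› (inferInstance : Mono (image.ι (R.γ M)))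
  R.adj_er.isZero_of_mono_of_isZero_obj (f ≫ image.ι (R.γ M)) hS

theorem isZero_of_epi_c {Q : B} {M : C} (g : R.c M ⟶ Q) [Epi g] (hQ : IsZero (R.e.obj Q)) :
    IsZero Q :=
  have : Epi (factorThruImage (R.γ M) ≫ g) := epi_comp' inferInstance ‹_›
  R.adj_le.isZero_of_epi_of_isZero_obj (factorThruImage (R.γ M) ≫ g) hQ

theorem epi_of_epi_e_map {X N : B} (f : X ⟶ N) [Epi (R.e.map f)]
    (hN : ∀ (Q : B) (g : N ⟶ Q), Epi g → IsZero (R.e.obj Q) → IsZero Q) : Epi f :=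
  Preadditive.epi_of_isZero_cokernel f
    (hN _ (cokernel.π f) inferInstance (R.e.isZero_obj_cokernel_of_epi_map f))

theorem mono_of_mono_e_map {N Y : B} (f : N ⟶ Y) [Mono (R.e.map f)]
    (hN : ∀ (S : B) (g : S ⟶ N), Mono g → IsZero (R.e.obj S) → IsZero S) : Mono f :=
  Preadditive.mono_of_isZero_kernel f
    (hN _ (kernel.ι f) inferInstance (R.e.isZero_obj_kernel_of_mono_map f))

theorem homEquiv_symm_comp_homEquiv_eq_γ {N : B} {M : C} (φ : R.e.obj N ≅ M) :
    (R.adj_le.homEquiv M N).symm φ.inv ≫ R.adj_er.homEquiv N M φ.hom = R.γ M := by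
  have hcounit :
      φ.inv ≫ R.e.map (R.adj_er.homEquiv N M φ.hom) = inv (R.adj_er.counit.app M) := by
    refine IsIso.eq_inv_of_inv_hom_id ?_
    rw [Category.assoc, ← Adjunction.homEquiv_counit, Equiv.symm_apply_apply, Iso.inv_hom_id]
  rw [γ, ← hcounit, Adjunction.homEquiv_naturality_right_symm]

end Recollement

variable {A : Type u} {B : Type u₁} {C : Type u₂}
    [Category.{v} A] [Category.{v₁} B] [Category.{v₂} C]
    [Abelian A] [Abelian B] [Abelian C]

/-- For `N` in the middle category with `e N ≅ M`, one has `N ≅ c M` if and only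
if `N` has no non-zero subobject and no non-zero quotient object killed by `e`
(i.e. lying in `A = Ker e`). -/
theorem recollement_iso_c_iff {R : Recollement A B C} {N : B} {M : C}
    (h : Nonempty (R.e.obj N ≅ M)) :
    Nonempty (N ≅ R.c M) ↔
      ((∀ (S : B) (f : S ⟶ N), Mono f → IsZero (R.e.obj S) → IsZero S) ∧
       (∀ (Q : B) (g : N ⟶ Q), Epi g → IsZero (R.e.obj Q) → IsZero Q)) := by
  obtain ⟨φ⟩ := h
  constructor
  · rintro ⟨ψ⟩
    exact ⟨fun S f (_ : Mono f) hS => R.isZero_of_mono_c (f ≫ ψ.hom) hS,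
      fun Q g (_ : Epi g) hQ => R.isZero_of_epi_c (ψ.inv ≫ g) hQ⟩
  · rintro ⟨hsub, hquot⟩
    set α := (R.adj_le.homEquiv M N).symm φ.inv
    set β := R.adj_er.homEquiv N M φ.hom
    have : IsIso (R.e.map α) := R.adj_le.isIso_map_homEquiv_symm φ.inv
    have : IsIso (R.e.map β) := R.adj_er.isIso_map_homEquiv φ.hom
    have : Epi α := R.epi_of_epi_e_map α hquot
    have : StrongEpi α := strongEpi_of_epi α
    have : Mono β := R.mono_of_mono_e_map β hsub
    exact ⟨image.isoStrongEpiMono α β (R.homEquiv_symm_comp_homEquiv_eq_γ φ)⟩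
end

section
/- In a recollement of abelian categories, the intermediate extension functor c: C → B preserves epimorphisms and monomorphisms, and sends simple objects of C to simple objects of B. -/
open CategoryTheory Limits

universe v u v₁ u₁ v₂ u₂

variable {A : Type u} {B : Type u₁} {C : Type u₂}
    [Category.{v} A] [Category.{v₁} B] [Category.{v₂} C]
    [Abelian A] [Abelian B] [Abelian C]

/-!
`ℓ` preserves epimorphisms and `r` monomorphisms, and `c M` is a quotient of `ℓ M` and a
subobject of `r M`; this gives the first two parts. For simplicity, `e` is exact and `e γ_M` is
split epi, so `e (c M) ≅ M`. Since `Hom(ℓ M, -)` and `Hom(-, r M)` vanish on objects killed by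
`e`, the object `c M` has no nonzero subobject or quotient killed by `e`. Hence a subobject
`u ↪ c M` is zero as soon as `e u` is, and is an isomorphism as soon as `e u` is (its cokernel is
killed by `e`), so simplicity of `e (c M) ≅ M` transfers to `c M`.
-/

namespace CategoryTheory

variable {C D : Type*} [Category C] [Category D] {F : C ⥤ D} {G : D ⥤ C}

lemma Adjunction.eq_zero_of_isZero_left_obj [HasZeroMorphisms C] (adj : F ⊣ G) {X : C}
    (hX : IsZero (F.obj X)) {Y : D} (f : X ⟶ G.obj Y) : f = 0 :=
  have : Subsingleton (F.obj X ⟶ Y) := ⟨hX.eq_of_src⟩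
  (adj.homEquiv X Y).symm.subsingleton.elim _ _

lemma Adjunction.eq_zero_of_isZero_right_obj [HasZeroMorphisms D] (adj : F ⊣ G) {Y : D}
    (hY : IsZero (G.obj Y)) {X : C} (f : F.obj X ⟶ Y) : f = 0 :=
  have : Subsingleton (X ⟶ G.obj Y) := ⟨hY.eq_of_tgt⟩
  (adj.homEquiv X Y).subsingleton.elim _ _

lemma Functor.simple_of_simple_obj_of_mono [HasZeroMorphisms C] [HasZeroMorphisms D]
    (F : C ⥤ D) [F.PreservesMonomorphisms] [F.PreservesZeroMorphisms] (X : C)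
    [Simple (F.obj X)]
    (isIso_of_isIso_map : ∀ {Y : C} (g : Y ⟶ X) [Mono g], IsIso (F.map g) → IsIso g)
    (eq_zero_of_map_eq_zero : ∀ {Y : C} (g : Y ⟶ X) [Mono g], F.map g = 0 → g = 0) :
    Simple X :=
  .mk fun g _ ↦
    ⟨fun _ hg ↦ (Simple.mono_isIso_iff_nonzero (F.map g)).mp inferInstance
        (by rw [hg, F.map_zero]),
      fun hg ↦
        isIso_of_isIso_map g (isIso_of_mono_of_nonzero (hg ∘ eq_zero_of_map_eq_zero g))⟩

end CategoryTheory

namespace Recollement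

variable (R : Recollement A B C)

instance : R.l.PreservesEpimorphisms := Functor.preservesEpimorphisms_of_adjunction R.adj_le
instance : R.r.PreservesMonomorphisms := Functor.preservesMonomorphisms_of_adjunction R.adj_er
instance : R.e.PreservesEpimorphisms := Functor.preservesEpimorphisms_of_adjunction R.adj_er
instance : R.e.PreservesMonomorphisms := Functor.preservesMonomorphisms_of_adjunction R.adj_le
instance inst_s5 : R.e.IsLeftAdjoint := R.adj_er.isLeftAdjoint
instance inst_s5_2 : IsIso R.adj_er.counit := R.counit_er_iso

lemma epi_of_factorThruImage_comp_eq {M N : C} {f : M ⟶ N} [Epi f] {g : R.c M ⟶ R.c N}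
    (w : factorThruImage (R.γ M) ≫ g = R.l.map f ≫ factorThruImage (R.γ N)) : Epi g :=
  -- explicit arguments: `R.c N` is not reducibly `image (R.γ N)`, so instance search would fail
  have : Epi (factorThruImage (R.γ M) ≫ g) := by
    rw [w]; exact epi_comp (R.l.map f) (factorThruImage (R.γ N))
  epi_of_epi (factorThruImage (R.γ M)) g

lemma mono_of_comp_image_ι_eq {M N : C} {f : M ⟶ N} [Mono f] {g : R.c M ⟶ R.c N}
    (w : g ≫ image.ι (R.γ N) = image.ι (R.γ M) ≫ R.r.map f) : Mono g :=
  have : Mono (g ≫ image.ι (R.γ N)) := by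
    rw [w]; exact mono_comp (image.ι (R.γ M)) (R.r.map f)
  mono_of_mono g (image.ι (R.γ N))

lemma adj_le_unit_comp_e_map_γ (M : C) :
    R.adj_le.unit.app M ≫ R.e.map (R.γ M) = inv (R.adj_er.counit.app M) :=
  (R.adj_le.homEquiv M (R.r.obj M)).apply_symm_apply _

instance (M : C) : IsSplitEpi (R.e.map (R.γ M)) :=
  ⟨⟨R.adj_er.counit.app M ≫ R.adj_le.unit.app M, by simp [adj_le_unit_comp_e_map_γ]⟩⟩

instance (M : C) : IsIso (R.e.map (image.ι (R.γ M))) := by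
  have : Epi (R.e.map (factorThruImage (R.γ M)) ≫ R.e.map (image.ι (R.γ M))) := by
    rw [← Functor.map_comp, image.fac]; infer_instance
  have : Epi (R.e.map (image.ι (R.γ M))) := epi_of_epi (R.e.map (factorThruImage (R.γ M))) _
  exact isIso_of_mono_of_epi _

noncomputable def eObjCIso (M : C) : R.e.obj (R.c M) ≅ M :=
  (asIso (R.e.map (image.ι (R.γ M))) ≪≫ asIso (R.adj_er.counit.app M) :
    R.e.obj (image (R.γ M)) ≅ M)

variable {R}

lemma hom_to_c_eq_zero_of_isZero_e_obj {Y : B} (hY : IsZero (R.e.obj Y)) {M : C}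
    (u : Y ⟶ R.c M) : u = 0 :=
  (cancel_mono (image.ι (R.γ M))).mp <|
    (R.adj_er.eq_zero_of_isZero_left_obj hY _).trans zero_comp.symm

lemma hom_from_c_eq_zero_of_isZero_e_obj {Y : B} (hY : IsZero (R.e.obj Y)) {M : C}
    (v : R.c M ⟶ Y) : v = 0 :=
  (cancel_epi (factorThruImage (R.γ M))).mp <|
    (R.adj_le.eq_zero_of_isZero_right_obj hY _).trans comp_zero.symm

lemma epi_of_isIso_e_map {Y : B} {M : C} (u : Y ⟶ R.c M) [IsIso (R.e.map u)] : Epi u := by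
  have hcoker : IsZero (R.e.obj (cokernel u)) :=
    (isZero_cokernel_of_epi (R.e.map u)).of_iso (PreservesCokernel.iso R.e u)
  exact Abelian.epi_of_cokernel_π_eq_zero u (hom_from_c_eq_zero_of_isZero_e_obj hcoker _)

lemma eq_zero_of_e_map_eq_zero {Y : B} {M : C} (u : Y ⟶ R.c M) [Mono u]
    (h : R.e.map u = 0) : u = 0 :=
  hom_to_c_eq_zero_of_isZero_e_obj (IsZero.of_mono_eq_zero _ h) u

lemma simple_c (M : C) [Simple M] : Simple (R.c M) :=
  have : Simple (R.e.obj (R.c M)) := .of_iso (R.eObjCIso M)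
  R.e.simple_of_simple_obj_of_mono _
    (fun u _ _ ↦ have := epi_of_isIso_e_map u; isIso_of_mono_of_epi u)
    eq_zero_of_e_map_eq_zero

end Recollement

-- The morphism `c f` is encoded as any `g` compatible with the image factorizations
-- `ℓ M ↠ c M ↪ r M` and `ℓ N ↠ c N ↪ r N`.
/-- The intermediate extension functor preserves epimorphisms and
monomorphisms, and sends simple objects to simple objects.  The map induced by `c` on a
morphism `f : M ⟶ N` is characterized as the unique morphism `g : c M ⟶ c N` compatible
with the image factorizations `ℓ M ↠ c M ↪ r M` and `ℓ N ↠ c N ↪ r N`. -/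
theorem recollement_c_preserves_epi_mono_simple (R : Recollement A B C) :
    (∀ (M N : C) (f : M ⟶ N) (g : R.c M ⟶ R.c N),
        Epi f → (factorThruImage (R.γ M) ≫ g = R.l.map f ≫ factorThruImage (R.γ N)) →
        Epi g) ∧
    (∀ (M N : C) (f : M ⟶ N) (g : R.c M ⟶ R.c N),
        Mono f → (g ≫ Limits.image.ι (R.γ N) = Limits.image.ι (R.γ M) ≫ R.r.map f) →
        Mono g) ∧
    (∀ M : C, Simple M → Simple (R.c M)) :=
  ⟨fun _ _ _ _ _ w ↦ R.epi_of_factorThruImage_comp_eq w,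
    fun _ _ _ _ _ w ↦ R.mono_of_comp_image_ι_eq w,
    fun M _ ↦ R.simple_c M⟩
end

section
/- In a recollement of abelian categories (A, B, C), the intermediate extension functor c: C → B is fully faithful; moreover for any object F of B and M of C, the maps Hom_B(c(M), F) → Hom_C(M, e(F)) and Hom_B(F, c(M)) → Hom_C(e(F), M) induced by applying e are injective. -/
/-! The maps `ℓ M ↠ c M ↪ r M` factor `γ M`, which `e` sends to an isomorphism because the unit
of `ℓ ⊣ e` and the counit of `e ⊣ r` are invertible; as `e` is exact, it also inverts `ℓ M ↠ c M`.
By adjunction `e` detects maps out of `ℓ M` and into `r M`, hence maps out of and into `c M`. For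
fullness, lift `ψ : e (c M) ⟶ e (c N)` to `α : ℓ M ⟶ c N`; `e` kills `ker (ℓ M ↠ c M) ≫ α`, which is
therefore zero, so `α` descends to `c M`. -/

open CategoryTheory Limits

universe v u v₁ u₁ v₂ u₂

namespace CategoryTheory.Adjunction

variable {C D : Type*} [Category C] [Category D] {F : C ⥤ D} {G : D ⥤ C}

lemma map_injective_from_left_obj (adj : F ⊣ G) (X : C) (Y : D) :
    Function.Injective (fun f : F.obj X ⟶ Y => G.map f) := fun f g h =>
  (adj.homEquiv X Y).injective <| by
    simpa only [homEquiv_unit] using congrArg (adj.unit.app X ≫ ·) h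

lemma map_injective_to_right_obj (adj : F ⊣ G) (X : C) (Y : D) :
    Function.Injective (fun f : X ⟶ G.obj Y => F.map f) := fun f g h =>
  (adj.homEquiv X Y).symm.injective <| by
    simpa only [homEquiv_counit] using congrArg (· ≫ adj.counit.app Y) h

lemma map_surjective_from_left_obj (adj : F ⊣ G) (X : C) (Y : D) [IsIso (adj.unit.app X)] :
    Function.Surjective (fun f : F.obj X ⟶ Y => G.map f) := fun g =>
  ⟨(adj.homEquiv X Y).symm (adj.unit.app X ≫ g), by
    dsimp only
    rw [← cancel_epi (adj.unit.app X), ← homEquiv_unit adj X Y, Equiv.apply_symm_apply]⟩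

end CategoryTheory.Adjunction

variable {A : Type u} {B : Type u₁} {C : Type u₂}
    [Category.{v} A] [Category.{v₁} B] [Category.{v₂} C]
    [Abelian A] [Abelian B] [Abelian C]

namespace Recollement

variable (R : Recollement A B C)

instance isLeftAdjoint_e : R.e.IsLeftAdjoint := ⟨R.r, ⟨R.adj_er⟩⟩

instance isRightAdjoint_e : R.e.IsRightAdjoint := ⟨R.l, ⟨R.adj_le⟩⟩

noncomputable def lToC (M : C) : R.l.obj M ⟶ R.c M := factorThruImage (R.γ M)

noncomputable def cToR (M : C) : R.c M ⟶ R.r.obj M := image.ι (R.γ M)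

instance epi_lToC (M : C) : Epi (R.lToC M) := inferInstanceAs (Epi (factorThruImage _))

instance mono_cToR (M : C) : Mono (R.cToR M) := inferInstanceAs (Mono (image.ι _))

lemma lToC_comp_cToR (M : C) : R.lToC M ≫ R.cToR M = R.γ M := image.fac _

lemma isIso_e_map_γ (M : C) : IsIso (R.e.map (R.γ M)) := by
  have := R.unit_le_iso
  have := R.counit_er_iso
  have : R.adj_le.unit.app M ≫ R.e.map (R.γ M) = inv (R.adj_er.counit.app M) := by
    rw [← Adjunction.homEquiv_unit R.adj_le M, γ, Equiv.apply_symm_apply]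
  have : IsIso (R.adj_le.unit.app M ≫ R.e.map (R.γ M)) := by rw [this]; infer_instance
  exact IsIso.of_isIso_comp_left (R.adj_le.unit.app M) _

lemma isIso_e_map_lToC (M : C) : IsIso (R.e.map (R.lToC M)) := by
  have := R.isIso_e_map_γ M
  have : IsIso (R.e.map (R.lToC M) ≫ R.e.map (R.cToR M)) := by
    rwa [← R.e.map_comp, lToC_comp_cToR]
  have := mono_of_mono (R.e.map (R.lToC M)) (R.e.map (R.cToR M))
  exact isIso_of_mono_of_epi _

lemma e_map_injective_from_c (M : C) (F : B) :
    Function.Injective (fun φ : R.c M ⟶ F => R.e.map φ) := by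
  intro φ ψ h
  dsimp only at h
  rw [← cancel_epi (R.lToC M)]
  apply R.adj_le.map_injective_from_left_obj
  simp only [Functor.map_comp, h]

lemma e_map_injective_to_c (M : C) (F : B) :
    Function.Injective (fun φ : F ⟶ R.c M => R.e.map φ) := by
  intro φ ψ h
  dsimp only at h
  rw [← cancel_mono (R.cToR M)]
  apply R.adj_er.map_injective_to_right_obj
  simp only [Functor.map_comp, h]

lemma e_map_surjective_c_c (M N : C) :
    Function.Surjective (fun φ : R.c M ⟶ R.c N => R.e.map φ) := by
  intro ψ
  have := R.unit_le_iso
  have := R.isIso_e_map_lToC M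
  obtain ⟨α, hα⟩ := R.adj_le.map_surjective_from_left_obj M (R.c N) (R.e.map (R.lToC M) ≫ ψ)
  dsimp only at hα
  have hker : kernel.ι (R.lToC M) ≫ α = 0 := R.e_map_injective_to_c N _ <| by
    dsimp only
    rw [Functor.map_comp, hα, ← Category.assoc, ← R.e.map_comp, kernel.condition,
      Functor.map_zero, zero_comp, Functor.map_zero]
  refine ⟨Abelian.epiDesc (R.lToC M) α hker, ?_⟩
  dsimp only
  rw [← cancel_epi (R.e.map (R.lToC M)), ← R.e.map_comp, Abelian.comp_epiDesc, hα]

end Recollement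

/-- Applying `e` to `Hom_B(c M, F)` and to `Hom_B(F, c M)` is injective
(identifying `e (c M)` with `M` via the natural isomorphism, this says the maps
`Hom_B(c M, F) → Hom_C(M, e F)` and `Hom_B(F, c M) → Hom_C(e F, M)` are injective);
moreover `c` is fully faithful: applying `e` gives a bijection
`Hom_B(c M, c N) ≃ Hom_C(e (c M), e (c N))`. -/
theorem recollement_c_fullyFaithful (R : Recollement A B C) :
    (∀ (M : C) (F : B),
        Function.Injective (fun φ : R.c M ⟶ F => R.e.map φ)) ∧
    (∀ (M : C) (F : B),
        Function.Injective (fun φ : F ⟶ R.c M => R.e.map φ)) ∧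
    (∀ M N : C,
        Function.Bijective (fun φ : R.c M ⟶ R.c N => R.e.map φ)) :=
  ⟨R.e_map_injective_from_c, R.e_map_injective_to_c,
    fun M N => ⟨R.e_map_injective_from_c M _, R.e_map_surjective_c_c M N⟩⟩
end

section
/- In a recollement of abelian categories, for an object F of the middle category B the following are equivalent: (1) Hom_B(G, F) = 0 for every G with e(G) = 0; (2) the unit map F → r(e(F)) is a monomorphism; (3) every non-zero subobject F' of F satisfies e(F') ≠ 0; (4) p(F) = 0. -/
open CategoryTheory Limits

universe v u v₁ u₁ v₂ u₂

variable {A : Type u} {B : Type u₁} {C : Type u₂}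
    [Category.{v} A] [Category.{v₁} B] [Category.{v₂} C]
    [Abelian A] [Abelian B] [Abelian C]

/-!
Objects killed by `e` are exactly the `i a`, and `Hom(i a, F) ≃ Hom(a, p F)`; this gives
(1) ⇔ (4). Since `r` is fully faithful, `e` inverts the unit `F ⟶ r (e F)`, so `e` kills its
kernel, giving (1) ⇒ (2); conversely a map `f : G ⟶ F` with `e G = 0` composed with the unit is
adjoint to `e f = 0`. For (3) ⇒ (1), `e` preserves epis, so it kills the image of such an `f`.
-/

namespace CategoryTheory

variable {𝒞 : Type*} {𝒟 : Type*} [Category 𝒞] [Category 𝒟]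

theorem Adjunction.hom_ext_of_isZero_left_obj {L : 𝒞 ⥤ 𝒟} {R : 𝒟 ⥤ 𝒞} (adj : L ⊣ R)
    {X : 𝒞} {Y : 𝒟} (hX : IsZero (L.obj X)) (f g : X ⟶ R.obj Y) : f = g :=
  (adj.homEquiv X Y).symm.injective (hX.eq_of_src _ _)

theorem Adjunction.hom_ext_of_isZero_right_obj {L : 𝒞 ⥤ 𝒟} {R : 𝒟 ⥤ 𝒞} (adj : L ⊣ R)
    {X : 𝒞} {Y : 𝒟} (hY : IsZero (R.obj Y)) (f g : L.obj X ⟶ Y) : f = g :=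
  (adj.homEquiv X Y).injective (hY.eq_of_tgt _ _)

variable [Abelian 𝒞]

theorem Functor.isZero_obj_kernel_of_isIso_map (e : 𝒞 ⥤ 𝒟) [HasZeroMorphisms 𝒟]
    [e.PreservesZeroMorphisms] [e.PreservesMonomorphisms] {X Y : 𝒞} (g : X ⟶ Y)
    [IsIso (e.map g)] : IsZero (e.obj (Limits.kernel g)) :=
  IsZero.of_mono_eq_zero (e.map (kernel.ι g)) <| by
    rw [← cancel_mono (e.map g), ← e.map_comp, kernel.condition, e.map_zero, zero_comp]

theorem Adjunction.forall_hom_eq_zero_iff_mono_unit_app [HasZeroMorphisms 𝒟]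
    {e : 𝒞 ⥤ 𝒟} {r : 𝒟 ⥤ 𝒞} (adj : e ⊣ r) [IsIso adj.counit] [e.PreservesMonomorphisms] (F : 𝒞) :
    (∀ (G : 𝒞) (f : G ⟶ F), IsZero (e.obj G) → f = 0) ↔ Mono (adj.unit.app F) := by
  have := adj.isLeftAdjoint
  constructor
  · intro h
    have := adj.fullyFaithfulROfIsIsoCounit.full
    have := adj.fullyFaithfulROfIsIsoCounit.faithful
    exact Preadditive.mono_of_kernel_zero (h _ _ (e.isZero_obj_kernel_of_isIso_map _))
  · intro _ G f hG
    rw [← cancel_mono (adj.unit.app F), zero_comp]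
    exact adj.hom_ext_of_isZero_left_obj hG _ _

theorem Functor.forall_hom_eq_zero_iff_forall_mono [HasZeroMorphisms 𝒟] (e : 𝒞 ⥤ 𝒟)
    [e.PreservesEpimorphisms] (F : 𝒞) :
    (∀ (G : 𝒞) (f : G ⟶ F), IsZero (e.obj G) → f = 0) ↔
      ∀ (F' : 𝒞) (f : F' ⟶ F), Mono f → ¬ IsZero F' → ¬ IsZero (e.obj F') := by
  constructor
  · intro h F' f _ hF' hF'e
    exact hF' (IsZero.of_mono_eq_zero f (h F' f hF'e))
  · intro h G f hG
    have him : IsZero (image f) := by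
      by_contra hne
      exact h _ (image.ι f) inferInstance hne (hG.of_epi (e.map (factorThruImage f)))
    rw [← image.fac f, him.eq_of_src (image.ι f) 0, comp_zero]

end CategoryTheory

theorem Recollement.isZero_p_obj_iff (R : Recollement A B C) (F : B) :
    IsZero (R.p.obj F) ↔ ∀ (G : B) (f : G ⟶ F), IsZero (R.e.obj G) → f = 0 := by
  constructor
  · intro hF G f hG
    obtain ⟨a, ⟨iso⟩⟩ := (R.ker_e G).mpr hG
    rw [← iso.inv_hom_id_assoc f, R.adj_ip.hom_ext_of_isZero_right_obj hF (iso.hom ≫ f) 0,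
      comp_zero]
  · intro h
    have := R.adj_ip.isRightAdjoint
    have hε : R.adj_ip.counit.app F = 0 := h _ _ ((R.ker_e _).mp ⟨_, ⟨Iso.refl _⟩⟩)
    rw [IsZero.iff_id_eq_zero, ← R.adj_ip.right_triangle_components F, hε, Functor.map_zero,
      comp_zero]

/-- characterizations of stable objects: for `F` in the middle category the
following are equivalent: (1) `Hom(G, F) = 0` whenever `e G = 0`; (2) the unit
`F → r (e F)` is a monomorphism; (3) every non-zero subobject of `F` is not killed by `e`;
(4) `p F = 0`. -/
theorem recollement_stable_tfae (R : Recollement A B C) (F : B) :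
    List.TFAE
      [ ∀ (G : B) (f : G ⟶ F), IsZero (R.e.obj G) → f = 0,
        Mono (R.adj_er.unit.app F),
        ∀ (F' : B) (f : F' ⟶ F), Mono f → ¬ IsZero F' → ¬ IsZero (R.e.obj F'),
        IsZero (R.p.obj F) ] := by
  have := R.counit_er_iso
  have := R.adj_le.isRightAdjoint
  have := R.adj_er.isLeftAdjoint
  tfae_have 1 ↔ 2 := R.adj_er.forall_hom_eq_zero_iff_mono_unit_app F
  tfae_have 1 ↔ 3 := R.e.forall_hom_eq_zero_iff_forall_mono F
  tfae_have 4 ↔ 1 := R.isZero_p_obj_iff F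
  tfae_finish
end

section
/- Let A be a finite-dimensional algebra, let Q be the category whose objects are surjective A-module homomorphisms f: P → X with P finitely generated projective, and morphisms commutative squares. If (θ, φ): (f: P → X) → (f': P' → X') is a morphism in Q such that θ: P → P' is a split monomorphism, then (θ, φ) becomes a monomorphism in the homotopy category H = Q/E, where E is the ideal of morphisms factoring through objects of the form 1: P'' → P''. -/
open CategoryTheory Limits

universe u

/-- An object of the category `Q`: a surjection `f : P → X` of finite-dimensional
`A`-modules with `P` projective. -/
structure QObj (A : Type u) [Ring A] : Type (u + 1) where
  P : ModuleCat.{u} A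
  X : ModuleCat.{u} A
  f : P ⟶ X
  surj : Function.Surjective f
  proj : Projective P
  finP : Module.Finite A P
  finX : Module.Finite A X

variable (K : Type u) {A : Type u} [Field K] [Ring A] [Algebra K A]

/-- Morphisms in `Q`: commuting squares `(t, s)` with `t ≫ f' = f ≫ s`, as a
`K`-submodule of the product. -/
def QHomSub (a b : QObj A) : Submodule K ((a.P ⟶ b.P) × (a.X ⟶ b.X)) where
  carrier := {ts | ts.1 ≫ b.f = a.f ≫ ts.2}
  add_mem' := by
    intro x y hx hy
    simp only [Set.mem_setOf_eq, Prod.fst_add, Prod.snd_add, Preadditive.add_comp,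
      Preadditive.comp_add] at *
    rw [hx, hy]
  zero_mem' := by simp
  smul_mem' := by
    intro k x hx
    simp only [Set.mem_setOf_eq, Prod.smul_fst, Prod.smul_snd, Linear.smul_comp,
      Linear.comp_smul] at *
    rw [hx]

theorem QHomSub_prop {a b : QObj A} (s : QHomSub K a b) :
    s.1.1 ≫ b.f = a.f ≫ s.1.2 := s.2

/-- The submodule of null-homotopic morphisms: those `(t, s)` with `t = f ≫ h` and
`s = h ≫ f'` for some `h : X → P'`. -/
def Htp (a b : QObj A) : Submodule K (QHomSub K a b) where
  carrier := {ts | ∃ h : a.X ⟶ b.P, ts.1.1 = a.f ≫ h ∧ ts.1.2 = h ≫ b.f}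
  add_mem' := by
    rintro x y ⟨h, hx1, hx2⟩ ⟨h', hy1, hy2⟩
    refine ⟨h + h', ?_, ?_⟩ <;>
      simp only [Submodule.coe_add, Prod.fst_add, Prod.snd_add, Preadditive.comp_add,
        Preadditive.add_comp, hx1, hx2, hy1, hy2]
  zero_mem' := ⟨0, by simp, by simp⟩
  smul_mem' := by
    rintro k x ⟨h, hx1, hx2⟩
    refine ⟨k • h, ?_, ?_⟩ <;>
      simp only [SetLike.val_smul, Prod.smul_fst, Prod.smul_snd, Linear.comp_smul,
        Linear.smul_comp, hx1, hx2]

/-- The homotopy category `H = Q/E`: same objects as `Q`, morphisms are homotopy classes. -/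
def HCat (K A : Type u) [Field K] [Ring A] [Algebra K A] : Type (u + 1) := QObj A

/-- Composition of representatives. -/
def compQ {a b c : QObj A} (s : QHomSub K a b) (t : QHomSub K b c) : QHomSub K a c :=
  ⟨(s.1.1 ≫ t.1.1, s.1.2 ≫ t.1.2), by
    show (s.1.1 ≫ t.1.1) ≫ c.f = a.f ≫ s.1.2 ≫ t.1.2
    rw [Category.assoc, QHomSub_prop, ← Category.assoc, QHomSub_prop, Category.assoc]⟩

theorem compQ_left_htp {a b c : QObj A} (s : QHomSub K a b) (t : QHomSub K b c)
    (hs : s ∈ Htp K a b) : compQ K s t ∈ Htp K a c := by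
  obtain ⟨h, h1, h2⟩ := hs
  refine ⟨h ≫ t.1.1, ?_, ?_⟩
  · show s.1.1 ≫ t.1.1 = a.f ≫ h ≫ t.1.1
    rw [h1, Category.assoc]
  · show s.1.2 ≫ t.1.2 = (h ≫ t.1.1) ≫ c.f
    rw [h2, Category.assoc, Category.assoc, QHomSub_prop]

theorem compQ_right_htp {a b c : QObj A} (s : QHomSub K a b) (t : QHomSub K b c)
    (ht : t ∈ Htp K b c) : compQ K s t ∈ Htp K a c := by
  obtain ⟨h, h1, h2⟩ := ht
  refine ⟨s.1.2 ≫ h, ?_, ?_⟩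
  · show s.1.1 ≫ t.1.1 = a.f ≫ s.1.2 ≫ h
    rw [h1, ← Category.assoc, QHomSub_prop, Category.assoc]
  · show s.1.2 ≫ t.1.2 = (s.1.2 ≫ h) ≫ c.f
    rw [h2, Category.assoc]

theorem compQ_sub_sub {a b c : QObj A} (s s' : QHomSub K a b) (t t' : QHomSub K b c) :
    compQ K s t - compQ K s' t' = compQ K (s - s') t + compQ K s' (t - t') := by
  apply Subtype.ext
  apply Prod.ext <;>
    simp [compQ, Preadditive.sub_comp, Preadditive.comp_sub]

instance : Category (HCat K A) where
  Hom a b := QHomSub K a b ⧸ Htp K a b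
  id a := Submodule.Quotient.mk ⟨(𝟙 a.P, 𝟙 a.X), by simp [QHomSub]⟩
  comp {a b c} x y := Quotient.liftOn₂ x y
    (fun s t => Submodule.Quotient.mk (compQ K s t))
    (by
      intro s t s' t' hs ht
      have hs' : s - s' ∈ Htp K a b := (Submodule.quotientRel_def _).mp hs
      have ht' : t - t' ∈ Htp K b c := (Submodule.quotientRel_def _).mp ht
      rw [Submodule.Quotient.eq]
      have e := compQ_sub_sub K s s' t t'
      have h := (Htp K a c).add_mem (compQ_left_htp K _ t hs') (compQ_right_htp K s' _ ht')
      exact (congrArg (fun z => z ∈ Htp K a c) e).mpr h)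
  id_comp := by
    rintro a b ⟨s⟩
    show Submodule.Quotient.mk (compQ K _ s) = Submodule.Quotient.mk s
    congr 1
  comp_id := by
    rintro a b ⟨s⟩
    show Submodule.Quotient.mk (compQ K s _) = Submodule.Quotient.mk s
    congr 1
  assoc := by
    rintro a b c d ⟨s⟩ ⟨t⟩ ⟨v⟩
    show Submodule.Quotient.mk (compQ K (compQ K s t) v)
      = Submodule.Quotient.mk (compQ K s (compQ K t v))
    congr 1

/-!
Let `ρ` be a retraction of `θ`. If `w ≫ (θ, φ)` is null-homotopic via `h`, then `w` is
null-homotopic via `h ≫ ρ`: its first component is `w₁ = w₁ θ ρ = f h ρ`, and for objects of `Q`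
a factorization of the first component through `f` already is a null-homotopy, because `f` is
epi. Since morphisms of `H` form abelian groups, being mono amounts to this cancellation.
-/

theorem QObj.epi_f (a : QObj A) : Epi a.f :=
  (ModuleCat.epi_iff_surjective a.f).mpr a.surj

theorem mem_Htp_iff {a b : QObj A} (w : QHomSub K a b) :
    w ∈ Htp K a b ↔ ∃ h : a.X ⟶ b.P, w.1.1 = a.f ≫ h := by
  refine ⟨fun ⟨h, h1, _⟩ => ⟨h, h1⟩, fun ⟨h, h1⟩ => ⟨h, h1, ?_⟩⟩
  have := a.epi_f
  rw [← cancel_epi a.f, ← QHomSub_prop K w, h1, Category.assoc]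

theorem mem_Htp_of_compQ_mem_Htp {a b c : QObj A} (w : QHomSub K c a) (t : QHomSub K a b)
    {ρ : b.P ⟶ a.P} (hρ : t.1.1 ≫ ρ = 𝟙 a.P) (hwt : compQ K w t ∈ Htp K c b) :
    w ∈ Htp K c a := by
  obtain ⟨h, hh⟩ := (mem_Htp_iff K _).mp hwt
  replace hh : w.1.1 ≫ t.1.1 = c.f ≫ h := hh
  refine (mem_Htp_iff K w).mpr ⟨h ≫ ρ, ?_⟩
  rw [← Category.assoc, ← hh, Category.assoc, hρ, Category.comp_id]

theorem compQ_sub_left {a b c : QObj A} (s s' : QHomSub K a b) (t : QHomSub K b c) :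
    compQ K (s - s') t = compQ K s t - compQ K s' t :=
  Subtype.ext (Prod.ext (Preadditive.sub_comp _ _ _) (Preadditive.sub_comp _ _ _))

namespace HCat

theorem mk_comp_mk {a b c : HCat K A} (s : QHomSub K a b) (t : QHomSub K b c) :
    (show a ⟶ b from Submodule.Quotient.mk s) ≫ (show b ⟶ c from Submodule.Quotient.mk t) =
      (show a ⟶ c from Submodule.Quotient.mk (compQ K s t)) :=
  rfl

theorem mk_eq_mk_iff {a b : HCat K A} (s s' : QHomSub K a b) :
    (show a ⟶ b from Submodule.Quotient.mk s) = (show a ⟶ b from Submodule.Quotient.mk s') ↔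
      s - s' ∈ Htp K a b :=
  Submodule.Quotient.eq _

end HCat

/-- if `(θ, φ)` is a morphism in `Q` whose first component `θ` is a split
monomorphism, then its homotopy class is a monomorphism in the homotopy category
`H = Q/E`. -/
theorem mono_in_homotopy_category_of_split_mono
    {K A : Type u} [Field K] [Ring A] [Algebra K A]
    (a b : HCat K A) (ts : QHomSub K a b)
    (hsplit : ∃ ρ : b.P ⟶ a.P, ts.1.1 ≫ ρ = 𝟙 a.P) :
    Mono (show a ⟶ b from Submodule.Quotient.mk ts) := by
  obtain ⟨ρ, hρ⟩ := hsplit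
  refine ⟨fun {c} g g' hgg' => ?_⟩
  induction g using Submodule.Quotient.induction_on with | _ s => ?_
  induction g' using Submodule.Quotient.induction_on with | _ s' => ?_
  rw [HCat.mk_comp_mk, HCat.mk_comp_mk, HCat.mk_eq_mk_iff] at hgg'
  exact (HCat.mk_eq_mk_iff K s s').mpr
    (mem_Htp_of_compQ_mem_Htp K _ ts hρ (compQ_sub_left K s s' ts ▸ hgg'))
end
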